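/- Let P be a Borel probability measure on Ω, μ a Borel probability measure on Ω×M whose marginal on Ω is P, and ω ↦ μ_ω a disintegration of μ over P (a measurable family of Borel probability measures on M with ∫_{Ω×M} h dμ = ∫_Ω ∫_M h(ω,x) dμ_ω(x) dP(ω) for all bounded measurable h). Fix n ∈ ℕ, ε > 0 and δ ∈ (0,1). Then the map ω ↦ S(ω,n,ε,δ) is measurable with respect to the P-completion of the Borel σ-algebra of Ω. -/

import Mathlib

/-!
`S(ω,n,ε,δ) ≤ m` exactly when some `m` closed `d_ω^n`-balls of radius `ε` carry `μ_ω`-mass at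
least `1 - δ`. By compactness of `Mᵐ` and continuity of `μ_ω` from above, this is equivalent to
asking it for every radius `ε + 1/(k+1)`, and then the centres may be taken from a countable dense
subset of `M`. For fixed centres and radius the union of balls is a closed subset of `Ω × M`, so its
`μ_ω`-mass is Borel in `ω`. Hence every sublevel set of `ω ↦ S(ω,n,ε,δ)` is Borel.
-/

open Set Filter Topology MeasureTheory ENNReal NNReal

noncomputable section

namespace Paper

variable {Ω M : Type*} [MetricSpace Ω] [MetricSpace M]

/-- Fiber forward iterates `F_ω^n = F_{θ^{n-1}ω} ∘ ⋯ ∘ F_ω`. -/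
def fIter (θ : Ω → Ω) (F : Ω → M → M) (ω : Ω) : ℕ → M → M
  | 0 => id
  | n + 1 => F (θ^[n] ω) ∘ fIter θ F ω n

/-- Fiber Bowen metric `d_ω^n`. -/
def dBowen (θ : Ω → Ω) (F : Ω → M → M) (ω : Ω) (n : ℕ) (x y : M) : ℝ :=
  ((Finset.range n).sup fun i => nndist (fIter θ F ω i x) (fIter θ F ω i y) : ℝ≥0)

/-- `S(ω,n,ε,δ) = min{S(ω,n,ε,K) : K ⊆ M Borel, μ_ω(K) ≥ 1-δ}`, where `S(ω,n,ε,K)`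
is the smallest cardinality of an `(ω,ε,n)`-spanning subset of `K`. -/
def Smin [MeasurableSpace M] (θ : Ω → Ω) (F : Ω → M → M) (κ : Ω → Measure M)
    (ω : Ω) (n : ℕ) (ε δ : ℝ) : ℕ :=
  sInf {m : ℕ | ∃ K : Set M, MeasurableSet K ∧ 1 - ENNReal.ofReal δ ≤ κ ω K ∧
    ∃ G : Finset M, (↑G : Set M) ⊆ K ∧
      (∀ y ∈ K, ∃ x ∈ G, dBowen θ F ω n x y ≤ ε) ∧ G.card = m}

section SpanningBalls

variable {X : Type*}

def closedBallsUnion {ι : Type*} (ρ : X → X → ℝ) (v : ι → X) (r : ℝ) : Set X :=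
  ⋃ i, {y | ρ (v i) y ≤ r}

def spanningCards [MeasurableSpace X] (ρ : X → X → ℝ) (ν : Measure X) (c : ℝ≥0∞) (ε : ℝ) :
    Set ℕ :=
  {m : ℕ | ∃ K : Set X, MeasurableSet K ∧ c ≤ ν K ∧
    ∃ G : Finset X, (↑G : Set X) ⊆ K ∧ (∀ y ∈ K, ∃ x ∈ G, ρ x y ≤ ε) ∧ G.card = m}

/-- `Smin θ F κ ω n ε δ` unfolds to
`minSpanCard (dBowen θ F ω n) (κ ω) (1 - ENNReal.ofReal δ) ε`. -/
def minSpanCard [MeasurableSpace X] (ρ : X → X → ℝ) (ν : Measure X) (c : ℝ≥0∞) (ε : ℝ) : ℕ :=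
  sInf (spanningCards ρ ν c ε)

variable {ι : Type*} {ρ : X → X → ℝ}

theorem closedBallsUnion_mono (v : ι → X) {r r' : ℝ} (h : r ≤ r') :
    closedBallsUnion ρ v r ⊆ closedBallsUnion ρ v r' :=
  iUnion_mono fun _ _ hy => le_trans hy h

theorem closedBallsUnion_subset (hρ_tri : ∀ x y z, ρ x z ≤ ρ x y + ρ y z) {v w : ι → X}
    {r s r' : ℝ} (hvw : ∀ i, ρ (w i) (v i) ≤ s) (hr : r + s ≤ r') :
    closedBallsUnion ρ v r ⊆ closedBallsUnion ρ w r' := fun y hy => by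
  obtain ⟨i, hi⟩ := mem_iUnion.1 hy
  have hi : ρ (v i) y ≤ r := hi
  exact mem_iUnion.2 ⟨i, (hρ_tri _ (v i) y).trans (by linarith [hvw i])⟩

theorem closedBallsUnion_eq_iInter [Finite ι] (v : ι → X) (ε : ℝ) :
    closedBallsUnion ρ v ε = ⋂ k : ℕ, closedBallsUnion ρ v (ε + 1 / (k + 1)) := by
  refine (subset_iInter fun k => closedBallsUnion_mono v
    (le_add_of_nonneg_right (by positivity))).antisymm fun y hy => ?_
  by_contra hyε
  have hfar : ∀ i, ε < ρ (v i) y := fun i => not_le.1 fun h => hyε (mem_iUnion.2 ⟨i, h⟩)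
  have hlim : Tendsto (fun k : ℕ => ε + 1 / ((k : ℝ) + 1)) atTop (𝓝 ε) := by
    simpa using tendsto_one_div_add_atTop_nhds_zero_nat.const_add ε
  obtain ⟨k, hk⟩ := (eventually_all.2 fun i => hlim.eventually_lt_const (hfar i)).exists
  obtain ⟨i, hi⟩ := mem_iUnion.1 (mem_iInter.1 hy k)
  exact (hk i).not_ge hi

variable [TopologicalSpace X]

theorem isClosed_closedBallsUnion [Finite ι] (hρ : ∀ x, Continuous (ρ x)) (v : ι → X) (r : ℝ) :
    IsClosed (closedBallsUnion ρ v r) :=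
  isClosed_iUnion_of_finite fun i => isClosed_le (hρ (v i)) continuous_const

theorem measure_closedBallsUnion_eq_iInf [MeasurableSpace X] [OpensMeasurableSpace X] [Finite ι]
    (hρ : ∀ x, Continuous (ρ x)) (ν : Measure X) [IsFiniteMeasure ν] (v : ι → X) (ε : ℝ) :
    ν (closedBallsUnion ρ v ε) = ⨅ k : ℕ, ν (closedBallsUnion ρ v (ε + 1 / (k + 1))) := by
  rw [closedBallsUnion_eq_iInter, Antitone.measure_iInter]
  · exact fun k l hkl => closedBallsUnion_mono v (by gcongr)
  · exact fun k => (isClosed_closedBallsUnion hρ v _).measurableSet.nullMeasurableSet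
  · exact ⟨0, measure_ne_top _ _⟩

theorem exists_forall_mem_le_measure_closedBallsUnion [MeasurableSpace X] {D : Set X}
    (hD : Dense D) (hρ : ∀ y, Continuous fun x => ρ x y) (hρ_self : ∀ x, ρ x x = 0)
    (hρ_tri : ∀ x y z, ρ x z ≤ ρ x y + ρ y z) (ν : Measure X) {v : ι → X} {c : ℝ≥0∞}
    {r s : ℝ} (hs : 0 < s) (hv : c ≤ ν (closedBallsUnion ρ v r)) :
    ∃ w : ι → X, (∀ i, w i ∈ D) ∧ c ≤ ν (closedBallsUnion ρ w (r + s)) := by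
  have hnear : ∀ i, ∃ x ∈ D, ρ x (v i) < s := fun i =>
    hD.exists_mem_open (isOpen_lt (hρ (v i)) continuous_const)
      ⟨v i, show ρ (v i) (v i) < s by rwa [hρ_self]⟩
  choose w hwD hw using hnear
  exact ⟨w, hwD, hv.trans
    (measure_mono (closedBallsUnion_subset hρ_tri (fun i => (hw i).le) le_rfl))⟩

/-- A cluster point of centres that work for the radii `ε + 1 / (k + 1)` works for every such
radius, hence for `ε` by continuity of `ν` from above. -/
theorem exists_le_measure_closedBallsUnion_of_forall_nat [CompactSpace X] [MeasurableSpace X]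
    [OpensMeasurableSpace X] [Finite ι] (hρ : Continuous (Function.uncurry ρ))
    (hρ_self : ∀ x, ρ x x = 0) (hρ_tri : ∀ x y z, ρ x z ≤ ρ x y + ρ y z) (ν : Measure X)
    [IsFiniteMeasure ν] {c : ℝ≥0∞} {ε : ℝ}
    (h : ∀ k : ℕ, ∃ v : ι → X, c ≤ ν (closedBallsUnion ρ v (ε + 1 / (k + 1)))) :
    ∃ v : ι → X, c ≤ ν (closedBallsUnion ρ v ε) := by
  have hρ₂ : ∀ x, Continuous (ρ x) := fun x => hρ.comp (continuous_const.prodMk continuous_id)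
  choose u hu using h
  obtain ⟨v, -, hv⟩ := isCompact_univ.exists_mapClusterPt (f := atTop) (u := u) (by simp)
  refine ⟨v, (measure_closedBallsUnion_eq_iInf hρ₂ ν v ε).symm ▸ le_iInf fun k => ?_⟩
  set η : ℝ := 1 / (k + 1) / 2 with hη_def
  have hη : 0 < η := by positivity
  have hkη : 1 / ((k : ℝ) + 1) = 2 * η := by rw [hη_def]; ring
  have hnear : ∀ᶠ w in 𝓝 v, ∀ i, ρ (v i) (w i) < η := eventually_all.2 fun i =>
    ((hρ₂ (v i)).comp (continuous_apply i)).continuousAt.eventually_lt continuousAt_const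
      (by simpa [hρ_self] using hη)
  have hsmall : ∀ᶠ j : ℕ in atTop, 1 / ((j : ℝ) + 1) < η :=
    tendsto_one_div_add_atTop_nhds_zero_nat.eventually_lt_const hη
  obtain ⟨j, hj, hjη⟩ := ((hv.frequently hnear).and_eventually hsmall).exists
  exact (hu j).trans (measure_mono (closedBallsUnion_subset hρ_tri (fun i => (hj i).le)
    (by linarith)))

theorem exists_le_measure_closedBallsUnion_iff [CompactSpace X] [MeasurableSpace X]
    [OpensMeasurableSpace X] [Finite ι] (hρ : Continuous (Function.uncurry ρ))
    (hρ_self : ∀ x, ρ x x = 0) (hρ_tri : ∀ x y z, ρ x z ≤ ρ x y + ρ y z) (ν : Measure X)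
    [IsFiniteMeasure ν] {D : Set X} (hD : Dense D) (c : ℝ≥0∞) (ε : ℝ) :
    (∃ v : ι → X, c ≤ ν (closedBallsUnion ρ v ε)) ↔
      ∀ k : ℕ, ∃ v : ι → X, (∀ i, v i ∈ D) ∧ c ≤ ν (closedBallsUnion ρ v (ε + 1 / (k + 1))) := by
  refine ⟨fun ⟨v, hv⟩ k => ?_, fun h => ?_⟩
  · exact exists_forall_mem_le_measure_closedBallsUnion hD
      (fun y => hρ.comp (continuous_id.prodMk continuous_const)) hρ_self hρ_tri ν
      Nat.one_div_pos_of_nat hv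
  · exact exists_le_measure_closedBallsUnion_of_forall_nat hρ hρ_self hρ_tri ν
      fun k => (h k).imp fun _ => And.right

theorem exists_finset_forall_exists_lt [CompactSpace X] (hρ : ∀ x, Continuous (ρ x))
    (hρ_self : ∀ x, ρ x x = 0) {ε : ℝ} (hε : 0 < ε) :
    ∃ G : Finset X, ∀ y, ∃ x ∈ G, ρ x y < ε := by
  obtain ⟨G, hG⟩ := isCompact_univ.elim_finite_subcover (fun x => {y | ρ x y < ε})
    (fun x => isOpen_lt (hρ x) continuous_const)
    (fun y _ => mem_iUnion.2 ⟨y, by simp [hρ_self, hε]⟩)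
  exact ⟨G, fun y => by simpa using hG (mem_univ y)⟩

variable [MeasurableSpace X] {ν : Measure X} {c : ℝ≥0∞} {ε : ℝ}

theorem minSpanCard_le_of_le_measure [OpensMeasurableSpace X] (hρ : ∀ x, Continuous (ρ x))
    (hρ_self : ∀ x, ρ x x = 0) (hε : 0 ≤ ε) {m : ℕ} (v : Fin m → X)
    (hv : c ≤ ν (closedBallsUnion ρ v ε)) : minSpanCard ρ ν c ε ≤ m := by
  classical
  refine le_trans (Nat.sInf_le ⟨_, (isClosed_closedBallsUnion hρ v ε).measurableSet, hv,
    Finset.univ.image v, ?_, ?_, rfl⟩) (Finset.card_image_le.trans_eq (Finset.card_fin m))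
  · intro x hx
    obtain ⟨i, -, rfl⟩ := Finset.mem_image.1 hx
    exact mem_iUnion.2 ⟨i, show ρ (v i) (v i) ≤ ε by rwa [hρ_self]⟩
  · intro y hy
    obtain ⟨i, hi⟩ := mem_iUnion.1 hy
    exact ⟨v i, by simp, hi⟩

theorem exists_le_measure_of_minSpanCard_le [CompactSpace X] (hρ : ∀ x, Continuous (ρ x))
    (hρ_self : ∀ x, ρ x x = 0) (hc₀ : 0 < c) (hc : c ≤ ν univ) (hε : 0 < ε) {m : ℕ}
    (h : minSpanCard ρ ν c ε ≤ m) : ∃ v : Fin m → X, c ≤ ν (closedBallsUnion ρ v ε) := by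
  obtain ⟨G₀, hG₀⟩ := exists_finset_forall_exists_lt hρ hρ_self hε
  obtain ⟨K, -, hcK, G, -, hspan, hcard⟩ := Nat.sInf_mem (s := spanningCards ρ ν c ε)
    ⟨G₀.card, univ, .univ, hc, G₀, subset_univ _,
      fun y _ => (hG₀ y).imp fun _ hx => ⟨hx.1, hx.2.le⟩, rfl⟩
  obtain ⟨x₀, -⟩ := nonempty_of_measure_ne_zero (hc₀.trans_le hcK).ne'
  let v : Fin G.card → X := fun i => G.equivFin.symm i
  have hle : G.card ≤ m := hcard.trans_le h
  refine ⟨Function.extend (Fin.castLE hle) v fun _ => x₀,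
    hcK.trans (measure_mono fun y hy => ?_)⟩
  obtain ⟨x, hx, hxy⟩ := hspan y hy
  refine mem_iUnion.2 ⟨Fin.castLE hle (G.equivFin ⟨x, hx⟩), ?_⟩
  simpa [(Fin.castLE_injective hle).extend_apply, v] using hxy

theorem minSpanCard_le_iff [CompactSpace X] [OpensMeasurableSpace X]
    (hρ : ∀ x, Continuous (ρ x)) (hρ_self : ∀ x, ρ x x = 0) (hc₀ : 0 < c) (hc : c ≤ ν univ)
    (hε : 0 < ε) (m : ℕ) :
    minSpanCard ρ ν c ε ≤ m ↔ ∃ v : Fin m → X, c ≤ ν (closedBallsUnion ρ v ε) :=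
  ⟨exists_le_measure_of_minSpanCard_le hρ hρ_self hc₀ hc hε,
    fun ⟨v, hv⟩ => minSpanCard_le_of_le_measure hρ hρ_self hε.le v hv⟩

end SpanningBalls

section MeasurableInBase

open ProbabilityTheory

variable {α X ι : Type*} [TopologicalSpace α] [MeasurableSpace α] [OpensMeasurableSpace α]
  [TopologicalSpace X] [MeasurableSpace X] [OpensMeasurableSpace X]
  [SecondCountableTopology X] [Finite ι]
  {ρ : α → X → X → ℝ}

theorem measurableSet_setOf_le_measure_closedBallsUnion (κ : Kernel α X) [IsFiniteKernel κ]
    (hρ : Continuous fun p : α × X × X => ρ p.1 p.2.1 p.2.2) (v : ι → X) (c : ℝ≥0∞) (r : ℝ) :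
    MeasurableSet {a | c ≤ κ a (closedBallsUnion (ρ a) v r)} := by
  let S : Set (α × X) := ⋃ i, {p | ρ p.1 (v i) p.2 ≤ r}
  have hS : IsClosed S := isClosed_iUnion_of_finite fun i => isClosed_le
    (hρ.comp (continuous_fst.prodMk (continuous_const.prodMk continuous_snd))) continuous_const
  have hslice : ∀ a, closedBallsUnion (ρ a) v r = Prod.mk a ⁻¹' S := fun a => by
    simp only [S, preimage_iUnion]; rfl
  simp only [hslice]
  exact measurableSet_le measurable_const (κ.measurable_kernel_prodMk_left hS.measurableSet)

theorem measurableSet_setOf_exists_le_measure_closedBallsUnion [CompactSpace X]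
    (κ : Kernel α X) [IsFiniteKernel κ]
    (hρ : Continuous fun p : α × X × X => ρ p.1 p.2.1 p.2.2) (hρ_self : ∀ a x, ρ a x x = 0)
    (hρ_tri : ∀ a x y z, ρ a x z ≤ ρ a x y + ρ a y z) (c : ℝ≥0∞) (ε : ℝ) :
    MeasurableSet {a | ∃ v : ι → X, c ≤ κ a (closedBallsUnion (ρ a) v ε)} := by
  obtain ⟨D, hDc, hD⟩ := TopologicalSpace.exists_countable_dense X
  have hcount : {a | ∃ v : ι → X, c ≤ κ a (closedBallsUnion (ρ a) v ε)} =
      ⋂ k : ℕ, ⋃ v ∈ {v : ι → X | ∀ i, v i ∈ D},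
        {a | c ≤ κ a (closedBallsUnion (ρ a) v (ε + 1 / (k + 1)))} := by
    ext a
    simp only [mem_ofPred_eq, mem_iInter, mem_iUnion, exists_prop]
    exact exists_le_measure_closedBallsUnion_iff
      (show Continuous (Function.uncurry (ρ a)) from
        hρ.comp (continuous_const.prodMk continuous_id)) (hρ_self a) (hρ_tri a) (κ a) hD c ε
  rw [hcount]
  exact .iInter fun k => .biUnion (countable_pi fun _ => hDc) fun v _ =>
    measurableSet_setOf_le_measure_closedBallsUnion κ hρ v c _

theorem measurable_minSpanCard [CompactSpace X] (κ : Kernel α X) [IsFiniteKernel κ]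
    (hρ : Continuous fun p : α × X × X => ρ p.1 p.2.1 p.2.2) (hρ_self : ∀ a x, ρ a x x = 0)
    (hρ_tri : ∀ a x y z, ρ a x z ≤ ρ a x y + ρ a y z) {c : ℝ≥0∞} (hc₀ : 0 < c)
    (hc : ∀ a, c ≤ κ a univ) {ε : ℝ} (hε : 0 < ε) :
    Measurable fun a => minSpanCard (ρ a) (κ a) c ε := by
  refine measurable_of_Iic fun m => ?_
  have hsub : (fun a => minSpanCard (ρ a) (κ a) c ε) ⁻¹' Iic m =
      {a | ∃ v : Fin m → X, c ≤ κ a (closedBallsUnion (ρ a) v ε)} := by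
    ext a
    exact minSpanCard_le_iff (fun x => hρ.comp (continuous_const.prodMk
      (continuous_const.prodMk continuous_id))) (hρ_self a) hc₀ (hc a) hε m
  rw [hsub]
  exact measurableSet_setOf_exists_le_measure_closedBallsUnion κ hρ hρ_self hρ_tri c ε

end MeasurableInBase

section Bowen

variable {α X : Type*} [MetricSpace X] {θ : α → α} {F : α → X → X}

theorem continuous_fIter [TopologicalSpace α] (hθ : Continuous θ)
    (hF : Continuous fun p : α × X => F p.1 p.2) (i : ℕ) :
    Continuous fun p : α × X => fIter θ F p.1 i p.2 := by
  induction i with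
  | zero => exact continuous_snd
  | succ i ih => exact hF.comp (((hθ.iterate i).comp continuous_fst).prodMk ih)

theorem continuous_dBowen [TopologicalSpace α] (hθ : Continuous θ)
    (hF : Continuous fun p : α × X => F p.1 p.2) (n : ℕ) :
    Continuous fun p : α × X × X => dBowen θ F p.1 n p.2.1 p.2.2 := by
  have hiter : ∀ i, Continuous fun p : α × X × X => fIter θ F p.1 i p.2.1 := fun i =>
    (continuous_fIter hθ hF i).comp (continuous_fst.prodMk (continuous_fst.comp continuous_snd))
  have hiter' : ∀ i, Continuous fun p : α × X × X => fIter θ F p.1 i p.2.2 := fun i =>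
    (continuous_fIter hθ hF i).comp (continuous_fst.prodMk (continuous_snd.comp continuous_snd))
  exact NNReal.continuous_coe.comp
    (Continuous.finset_sup_apply fun i _ => (hiter i).nndist (hiter' i))

theorem dBowen_self (ω : α) (n : ℕ) (x : X) : dBowen θ F ω n x x = 0 := by
  simp [dBowen]

theorem dBowen_triangle (ω : α) (n : ℕ) (x y z : X) :
    dBowen θ F ω n x z ≤ dBowen θ F ω n x y + dBowen θ F ω n y z := by
  simp only [dBowen, ← NNReal.coe_add, NNReal.coe_le_coe]
  exact Finset.sup_le fun i hi => (nndist_triangle _ _ _).trans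
    (add_le_add (Finset.le_sup (f := fun i => nndist (fIter θ F ω i x) (fIter θ F ω i y)) hi)
      (Finset.le_sup (f := fun i => nndist (fIter θ F ω i y) (fIter θ F ω i z)) hi))

end Bowen

theorem Smin_null_measurable_general
    [CompactSpace M]
    [MeasurableSpace Ω] [BorelSpace Ω] [MeasurableSpace M] [BorelSpace M]
    (θ : Ω → Ω) (hθ : Continuous θ)
    (F : Ω → M → M) (hF : Continuous fun p : Ω × M => F p.1 p.2)
    (P : Measure Ω)
    (κ : Ω → Measure M)
    -- ω ↦ μ_ω is a measurable family of Borel probability measures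
    (hκmeas : ∀ B : Set M, MeasurableSet B → Measurable fun ω => κ ω B)
    (hκprob : ∀ ω, IsProbabilityMeasure (κ ω))
    (n : ℕ) (ε δ : ℝ) (hε : 0 < ε) (hδ1 : δ < 1) :
    NullMeasurable (fun ω => Smin θ F κ ω n ε δ) P := by
  let K : ProbabilityTheory.Kernel Ω M := ⟨κ, Measure.measurable_of_measurable_coe κ hκmeas⟩
  have : ProbabilityTheory.IsMarkovKernel K := ⟨hκprob⟩
  have hc₀ : 0 < 1 - ENNReal.ofReal δ := tsub_pos_of_lt (ENNReal.ofReal_lt_one.2 hδ1)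
  exact (measurable_minSpanCard K (continuous_dBowen hθ hF n) (fun ω => dBowen_self ω n)
    (fun ω => dBowen_triangle ω n) hc₀ (fun ω => by simp [K]) hε).nullMeasurable

/-- if `ω ↦ μ_ω` is a disintegration over `P` of a measure `μ` on
`Ω × M` with marginal `P`, then `ω ↦ S(ω,n,ε,δ)` is measurable with respect to the
`P`-completion of the Borel σ-algebra of `Ω`. -/
theorem Smin_null_measurable
    [CompactSpace Ω] [CompactSpace M]
    [MeasurableSpace Ω] [BorelSpace Ω] [MeasurableSpace M] [BorelSpace M]
    (θ : Ω → Ω) (hθ : Continuous θ)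
    (F : Ω → M → M) (hF : Continuous fun p : Ω × M => F p.1 p.2)
    (P : Measure Ω) [IsProbabilityMeasure P]
    (μ : Measure (Ω × M)) [IsProbabilityMeasure μ]
    (κ : Ω → Measure M)
    -- ω ↦ μ_ω is a measurable family of Borel probability measures
    (hκmeas : ∀ B : Set M, MeasurableSet B → Measurable fun ω => κ ω B)
    (hκprob : ∀ ω, IsProbabilityMeasure (κ ω))
    -- the marginal of μ on Ω is P
    (hmarg : Measure.map Prod.fst μ = P)
    -- ω ↦ μ_ω disintegrates μ over P
    (hdis : ∀ s : Set (Ω × M), MeasurableSet s →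
      μ s = ∫⁻ ω, κ ω {x : M | (ω, x) ∈ s} ∂P)
    (n : ℕ) (ε δ : ℝ) (hε : 0 < ε) (hδ0 : 0 < δ) (hδ1 : δ < 1) :
    NullMeasurable (fun ω => Smin θ F κ ω n ε δ) P :=
  Smin_null_measurable_general θ hθ F hF P κ hκmeas hκprob n ε δ hε hδ1

end Paper
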